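/- arXiv:1207.1893 — 4 statements merged into one kernel-verified Lean document; each statement's English description precedes it below -/
import Mathlib

section
/- Let T > 0 and let A, J be real n×n matrices. The following are equivalent: (a) for every initial vector x₀ ∈ ℝⁿ, the sequence (x_k) defined by x_{k+1} = exp(T·A)·J·x_k, x_0 = x₀, satisfies sup_{τ∈[0,T]} ‖exp(τ·A)·J·x_k‖ → 0 as k → ∞ (asymptotic stability of the T-periodic impulsive system); (b) for every x₀ ∈ ℝⁿ, the sequence (x_k) with x_{k+1} = exp(T·A)·J·x_k tends to 0 as k → ∞; (c) there exists a real symmetric positive definite n×n matrix P such that ℐ(P,A,J,T) is negative definite. -/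
/-!
Put `M = exp(T·A)·J`, so that the recursion reads `x_k = M^k x₀`, and `ℐ(P,A,J,T) = MᵀPM − P`
because `exp(T·Aᵀ) = exp(T·A)ᵀ`.

(a) ⇔ (b): on the compact interval `[0, T]` the matrices `exp(τA)` are uniformly bounded, so the
lifted supremum lies between `‖x_{k+1}‖` (take `τ = T`) and a constant times `‖J x_k‖`.

(b) ⇒ (c): `M^k → 0`, so some power `M^N` is a strict contraction for the Euclidean norm; the
finite Gramian `P = ∑_{k<N} (M^k)ᵀ M^k` is then positive definite and telescopes to
`MᵀPM − P = (M^N)ᵀ M^N − 1 ≺ 0`.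

(c) ⇒ (b): `V(x) = xᵀPx ≥ 0` drops by at least `c‖x_k‖²` at each step, so `∑ c‖x_k‖² ≤ V(x₀)`.
-/

open Matrix Filter

/-- Matrix exponential of a real square matrix. -/
noncomputable def mexp {n : ℕ} (A : Matrix (Fin n) (Fin n) ℝ) : Matrix (Fin n) (Fin n) ℝ :=
  NormedSpace.exp A

/-- ℐ(P,A,J,T) := Jᵀ·exp(T·Aᵀ)·P·exp(T·A)·J − P. -/
noncomputable def scrI {n : ℕ} (P A J : Matrix (Fin n) (Fin n) ℝ) (T : ℝ) :
    Matrix (Fin n) (Fin n) ℝ :=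
  Jᵀ * mexp (T • Aᵀ) * P * mexp (T • A) * J - P

/-- xᵀMx < 0 for all x ≠ 0. -/
def negDef {m : Type*} [Fintype m] (M : Matrix m m ℝ) : Prop :=
  ∀ x : m → ℝ, x ≠ 0 → x ⬝ᵥ M.mulVec x < 0

/-- xᵀMx > 0 for all x ≠ 0. -/
def posDef {m : Type*} [Fintype m] (M : Matrix m m ℝ) : Prop :=
  ∀ x : m → ℝ, x ≠ 0 → 0 < x ⬝ᵥ M.mulVec x

/-- xᵀMx ≥ 0 for all x. -/
def posSemidef {m : Type*} [Fintype m] (M : Matrix m m ℝ) : Prop :=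
  ∀ x : m → ℝ, 0 ≤ x ⬝ᵥ M.mulVec x

open Topology

section Coercive

variable {E : Type*} [NormedAddCommGroup E] [NormedSpace ℝ E] [FiniteDimensional ℝ E]

theorem exists_pos_mul_sq_norm_le {f : E → ℝ} (hf : Continuous f)
    (hsmul : ∀ (t : ℝ) x, f (t • x) = t ^ 2 * f x) (hpos : ∀ x, x ≠ 0 → 0 < f x) :
    ∃ c > 0, ∀ x, c * ‖x‖ ^ 2 ≤ f x := by
  have hf0 : f 0 = 0 := by simpa using hsmul 0 0
  rcases subsingleton_or_nontrivial E with hE | hE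
  · exact ⟨1, one_pos, fun x => by simp [Subsingleton.elim x 0, hf0]⟩
  obtain ⟨u, hu, hmin⟩ := (isCompact_sphere (0 : E) 1).exists_isMinOn
    (NormedSpace.sphere_nonempty.2 zero_le_one) hf.continuousOn
  have hu0 : u ≠ 0 := ne_zero_of_mem_unit_sphere ⟨u, hu⟩
  refine ⟨f u, hpos u hu0, fun x => ?_⟩
  rcases eq_or_ne x 0 with rfl | hx
  · simp [hf0]
  have hx' : ‖x‖ ≠ 0 := norm_ne_zero_iff.2 hx
  have hunit : ‖x‖⁻¹ • x ∈ Metric.sphere (0 : E) 1 := by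
    simp [norm_smul, hx']
  calc f u * ‖x‖ ^ 2 ≤ f (‖x‖⁻¹ • x) * ‖x‖ ^ 2 := by gcongr; exact hmin hunit
    _ = f x := by rw [hsmul]; field_simp

end Coercive

section QuadraticForm

variable {m : Type*} [Fintype m]

theorem posSemidef_of_posDef {P : Matrix m m ℝ} (hP : posDef P) : posSemidef P := by
  intro x
  rcases eq_or_ne x 0 with rfl | hx
  · simp
  · exact (hP x hx).le

theorem smul_dotProduct_mulVec_smul (S : Matrix m m ℝ) (t : ℝ) (x : m → ℝ) :
    (t • x) ⬝ᵥ S *ᵥ (t • x) = t ^ 2 * (x ⬝ᵥ S *ᵥ x) := by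
  simp only [mulVec_smul, smul_dotProduct, dotProduct_smul, smul_eq_mul]
  ring

theorem negDef.exists_le_neg_mul_sq_norm {S : Matrix m m ℝ} (hS : negDef S) :
    ∃ c > 0, ∀ x, x ⬝ᵥ S *ᵥ x ≤ -(c * ‖x‖ ^ 2) := by
  obtain ⟨c, hc, h⟩ := exists_pos_mul_sq_norm_le (f := fun x => -(x ⬝ᵥ S *ᵥ x))
    (by fun_prop) (fun t x => by simp only [smul_dotProduct_mulVec_smul]; ring)
    (fun x hx => neg_pos.2 (hS x hx))
  exact ⟨c, hc, fun x => le_neg.2 (h x)⟩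

theorem mulVec_dotProduct_mulVec_mulVec (M P : Matrix m m ℝ) (x : m → ℝ) :
    (M *ᵥ x) ⬝ᵥ P *ᵥ (M *ᵥ x) = x ⬝ᵥ (Mᵀ * P * M) *ᵥ x := by
  rw [← mulVec_mulVec, ← mulVec_mulVec, dotProduct_mulVec x, vecMul_transpose]

theorem tendsto_zero_of_posSemidef_of_negDef {M P : Matrix m m ℝ} (hP : posSemidef P)
    (hS : negDef (Mᵀ * P * M - P)) {x : ℕ → m → ℝ} (hx : ∀ k, x (k + 1) = M *ᵥ x k) :
    Tendsto x atTop (𝓝 0) := by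
  obtain ⟨c, hc, hle⟩ := hS.exists_le_neg_mul_sq_norm
  set V : ℕ → ℝ := fun k => x k ⬝ᵥ P *ᵥ x k
  have hstep : ∀ k, c * ‖x k‖ ^ 2 ≤ V k - V (k + 1) := fun k => by
    have := hle (x k)
    simp only [sub_mulVec, dotProduct_sub, ← mulVec_dotProduct_mulVec_mulVec, ← hx] at this
    linarith
  have hsum : Summable fun k => c * ‖x k‖ ^ 2 :=
    summable_of_sum_range_le (c := V 0) (fun k => by positivity) fun N => by
      calc ∑ k ∈ Finset.range N, c * ‖x k‖ ^ 2
          ≤ ∑ k ∈ Finset.range N, (V k - V (k + 1)) := Finset.sum_le_sum fun k _ => hstep k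
        _ = V 0 - V N := Finset.sum_range_sub' V N
        _ ≤ V 0 := sub_le_self _ (hP (x N))
  have hsq : Tendsto (fun k => ‖x k‖ ^ 2) atTop (𝓝 0) := by
    simpa [hc.ne'] using ((hsum.mul_left c⁻¹).tendsto_atTop_zero)
  refine tendsto_zero_iff_norm_tendsto_zero.2 ?_
  simpa using hsq.sqrt

theorem dotProduct_self_eq_norm_toLp_sq (x : m → ℝ) :
    x ⬝ᵥ x = ‖(WithLp.toLp 2 x : EuclideanSpace ℝ m)‖ ^ 2 := by
  rw [← real_inner_self_eq_norm_sq, EuclideanSpace.inner_toLp_toLp, star_trivial]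

attribute [local instance] Matrix.linftyOpNormedAddCommGroup in
theorem IsCompact.exists_norm_mulVec_le {K : Set ℝ} (hK : IsCompact K) {F : ℝ → Matrix m m ℝ}
    (hF : ContinuousOn F K) : ∃ C, ∀ τ ∈ K, ∀ v, ‖F τ *ᵥ v‖ ≤ C * ‖v‖ := by
  obtain ⟨C, hC⟩ := hK.exists_bound_of_continuousOn hF
  exact ⟨C, fun τ hτ v => (linfty_opNorm_mulVec _ v).trans (by gcongr; exact hC τ hτ)⟩

variable {F : ℝ → Matrix m m ℝ} {T : ℝ} {ι : Type*} {l : Filter ι} {y : ι → m → ℝ}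

theorem tendsto_iSup_Icc_norm_mulVec (hF : Continuous F) (hT : 0 ≤ T)
    (hy : Tendsto y l (𝓝 0)) :
    Tendsto (fun k => ⨆ τ : Set.Icc 0 T, ‖F τ *ᵥ y k‖) l (𝓝 0) := by
  obtain ⟨C, hC⟩ := isCompact_Icc.exists_norm_mulVec_le hF.continuousOn
  have : Nonempty (Set.Icc 0 T) := ⟨⟨0, Set.left_mem_Icc.2 hT⟩⟩
  refine squeeze_zero (fun k => Real.iSup_nonneg fun τ => norm_nonneg _)
    (fun k => ciSup_le fun τ => hC τ τ.2 (y k)) ?_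
  simpa using hy.norm.const_mul C

theorem tendsto_mulVec_of_tendsto_iSup_Icc (hF : Continuous F) (hT : 0 ≤ T)
    (h : Tendsto (fun k => ⨆ τ : Set.Icc 0 T, ‖F τ *ᵥ y k‖) l (𝓝 0)) :
    Tendsto (fun k => F T *ᵥ y k) l (𝓝 0) := by
  obtain ⟨C, hC⟩ := isCompact_Icc.exists_norm_mulVec_le hF.continuousOn
  refine tendsto_zero_iff_norm_tendsto_zero.2 <| squeeze_zero (fun k => norm_nonneg _)
    (fun k => ?_) h
  exact le_ciSup (f := fun τ : Set.Icc 0 T => ‖F τ *ᵥ y k‖)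
    ⟨C * ‖y k‖, Set.forall_mem_range.2 fun τ => hC τ τ.2 (y k)⟩ ⟨T, Set.right_mem_Icc.2 hT⟩

end QuadraticForm

section Gramian

variable {m : Type*} [Fintype m] [DecidableEq m]

theorem tendsto_zero_of_forall_tendsto_mulVec {ι : Type*} {l : Filter ι} {A : ι → Matrix m m ℝ}
    (h : ∀ v, Tendsto (fun k => A k *ᵥ v) l (𝓝 0)) : Tendsto A l (𝓝 0) :=
  tendsto_pi_nhds.2 fun i => tendsto_pi_nhds.2 fun j => by
    simpa [mulVec_single_one] using tendsto_pi_nhds.1 (h (Pi.single j 1)) i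

open scoped Matrix.Norms.L2Operator in
theorem Filter.Tendsto.eventually_mulVec_dotProduct_mulVec_lt {ι : Type*} {l : Filter ι}
    {A : ι → Matrix m m ℝ} (h : Tendsto A l (𝓝 0)) :
    ∀ᶠ k in l, ∀ x, x ≠ 0 → (A k *ᵥ x) ⬝ᵥ (A k *ᵥ x) < x ⬝ᵥ x := by
  filter_upwards [(tendsto_zero_iff_norm_tendsto_zero.1 h).eventually_lt_const one_pos]
    with k hk x hx
  have hx' : 0 < ‖(WithLp.toLp 2 x : EuclideanSpace ℝ m)‖ := by simpa using hx
  rw [dotProduct_self_eq_norm_toLp_sq, dotProduct_self_eq_norm_toLp_sq]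
  gcongr
  calc ‖(WithLp.toLp 2 (A k *ᵥ x) : EuclideanSpace ℝ m)‖
      ≤ ‖A k‖ * ‖(WithLp.toLp 2 x : EuclideanSpace ℝ m)‖ := (A k).l2_opNorm_mulVec _
    _ < ‖(WithLp.toLp 2 x : EuclideanSpace ℝ m)‖ := mul_lt_of_lt_one_left hx' hk

def powGramian (M : Matrix m m ℝ) (N : ℕ) : Matrix m m ℝ :=
  ∑ k ∈ Finset.range N, (M ^ k)ᵀ * M ^ k

variable (M : Matrix m m ℝ) (N : ℕ)

theorem powGramian_isSymm : (powGramian M N).IsSymm := by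
  simp [powGramian, Matrix.IsSymm, transpose_sum, transpose_mul]

theorem dotProduct_powGramian_mulVec (x : m → ℝ) :
    x ⬝ᵥ powGramian M N *ᵥ x = ∑ k ∈ Finset.range N, (M ^ k *ᵥ x) ⬝ᵥ (M ^ k *ᵥ x) := by
  simp only [powGramian, sum_mulVec, dotProduct_sum]
  refine Finset.sum_congr rfl fun k _ => ?_
  rw [← mulVec_mulVec, dotProduct_mulVec x, vecMul_transpose]

theorem transpose_mul_powGramian_mul_sub :
    Mᵀ * powGramian M N * M - powGramian M N = (M ^ N)ᵀ * M ^ N - 1 := by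
  have hshift :
      Mᵀ * powGramian M N * M = ∑ k ∈ Finset.range N, (M ^ (k + 1))ᵀ * M ^ (k + 1) := by
    simp only [powGramian, Finset.mul_sum, Finset.sum_mul, pow_succ, transpose_mul,
      Matrix.mul_assoc]
  rw [hshift, powGramian, ← Finset.sum_sub_distrib,
    Finset.sum_range_sub (fun k => (M ^ k)ᵀ * M ^ k)]
  simp

theorem posDef_powGramian (hN : 0 < N) : posDef (powGramian M N) := by
  intro x hx
  rw [dotProduct_powGramian_mulVec]
  calc 0 < x ⬝ᵥ x := by simpa using dotProduct_star_self_pos_iff.2 hx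
    _ = (M ^ 0 *ᵥ x) ⬝ᵥ (M ^ 0 *ᵥ x) := by simp
    _ ≤ _ := Finset.single_le_sum (f := fun k => (M ^ k *ᵥ x) ⬝ᵥ (M ^ k *ᵥ x))
        (fun k _ => by rw [dotProduct_self_eq_norm_toLp_sq]; positivity) (Finset.mem_range.2 hN)

theorem exists_lyapunov_of_tendsto_pow_mulVec {M : Matrix m m ℝ}
    (hM : ∀ x, Tendsto (fun k => M ^ k *ᵥ x) atTop (𝓝 0)) :
    ∃ P : Matrix m m ℝ, P.IsSymm ∧ posDef P ∧ negDef (Mᵀ * P * M - P) := by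
  obtain ⟨N, hcontr, hN⟩ :=
    ((tendsto_zero_of_forall_tendsto_mulVec hM).eventually_mulVec_dotProduct_mulVec_lt.and
      (eventually_gt_atTop 0)).exists
  refine ⟨powGramian M N, powGramian_isSymm M N, posDef_powGramian M N hN, fun x hx => ?_⟩
  have hquad := mulVec_dotProduct_mulVec_mulVec (M ^ N) 1 x
  rw [one_mulVec, Matrix.mul_one] at hquad
  rw [transpose_mul_powGramian_mul_sub, sub_mulVec, dotProduct_sub, one_mulVec, ← hquad]
  exact sub_neg.2 (hcontr x hx)

end Gramian

theorem continuous_mexp_smul {n : ℕ} (A : Matrix (Fin n) (Fin n) ℝ) :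
    Continuous fun τ : ℝ => mexp (τ • A) := by
  let := Matrix.linftyOpNormedRing (n := Fin n) (α := ℝ)
  let := Matrix.linftyOpNormedAlgebra (n := Fin n) (R := ℝ) (α := ℝ)
  let : NormedAlgebra ℚ (Matrix (Fin n) (Fin n) ℝ) := .restrictScalars ℚ ℝ _
  exact NormedSpace.exp_continuous.comp (continuous_id.smul continuous_const)

theorem scrI_eq {n : ℕ} (P A J : Matrix (Fin n) (Fin n) ℝ) (T : ℝ) :
    scrI P A J T = (mexp (T • A) * J)ᵀ * P * (mexp (T • A) * J) - P := by
  rw [scrI, mexp, mexp, ← transpose_smul, Matrix.exp_transpose, transpose_mul]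
  simp only [Matrix.mul_assoc]

/-- equivalence of (a) asymptotic stability of the `T`-periodic impulsive
system in the lifted sense, (b) asymptotic stability of the discrete-time system
`x_{k+1} = exp(T·A)·J·x_k`, and (c) existence of a symmetric positive definite `P` with
`ℐ(P,A,J,T) ≺ 0`. -/
theorem stmt0 {n : ℕ} (T : ℝ) (hT : 0 < T) (A J : Matrix (Fin n) (Fin n) ℝ) :
    ((∀ x : ℕ → Fin n → ℝ,
        (∀ k, x (k + 1) = (mexp (T • A) * J).mulVec (x k)) →
        Tendsto (fun k => ⨆ τ : Set.Icc (0 : ℝ) T,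
          ‖(mexp ((τ : ℝ) • A)).mulVec (J.mulVec (x k))‖) atTop (nhds 0)) ↔
      (∀ x : ℕ → Fin n → ℝ,
        (∀ k, x (k + 1) = (mexp (T • A) * J).mulVec (x k)) →
        Tendsto x atTop (nhds 0))) ∧
    ((∀ x : ℕ → Fin n → ℝ,
        (∀ k, x (k + 1) = (mexp (T • A) * J).mulVec (x k)) →
        Tendsto x atTop (nhds 0)) ↔
      (∃ P : Matrix (Fin n) (Fin n) ℝ, P.IsSymm ∧ posDef P ∧ negDef (scrI P A J T))) := by
  have hF := continuous_mexp_smul A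
  have hJ {y : ℕ → Fin n → ℝ} (hy : Tendsto y atTop (𝓝 0)) :
      Tendsto (fun k => J *ᵥ y k) atTop (𝓝 0) :=
    ((continuous_const.matrix_mulVec continuous_id).tendsto' 0 0 (mulVec_zero J)).comp hy
  simp only [scrI_eq]
  refine ⟨⟨fun h x hx => ?_, fun h x hx => ?_⟩, ⟨fun h => ?_, fun ⟨P, _, hP, hS⟩ x hx => ?_⟩⟩
  · refine (tendsto_add_atTop_iff_nat 1).1 ?_
    simpa only [hx, mulVec_mulVec] using tendsto_mulVec_of_tendsto_iSup_Icc hF hT.le (h x hx)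
  · -- `(e :)` elaborates `e` before comparing with the goal; unifying first times out on `⨆`.
    exact (tendsto_iSup_Icc_norm_mulVec hF hT.le (hJ (h x hx)) :)
  · exact exists_lyapunov_of_tendsto_pow_mulVec fun x₀ => h _ fun k => by
      rw [pow_succ', ← mulVec_mulVec]
  · exact tendsto_zero_of_posSemidef_of_negDef (posSemidef_of_posDef hP) hS hx
end

section
/- Let P be a real symmetric n×n matrix and A a real n×n matrix such that AᵀP + PA is negative definite. Then for all real numbers 0 ≤ t < s, the matrix exp(s·Aᵀ)·P·exp(s·A) − exp(t·Aᵀ)·P·exp(t·A) is negative definite; in particular, the map s ↦ exp(s·Aᵀ)·P·exp(s·A) is strictly decreasing in the Loewner order on [0,∞). -/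
open Matrix Filter

/-!
Write `F(u) = exp(u Aᵀ) P exp(u A) = E(u)ᵀ P E(u)` with `E(u) = exp(u A)`. Since `A` commutes with
`E(u)`, `F'(u) = E(u)ᵀ (AᵀP + PA) E(u)`, a congruence of the negative definite matrix `AᵀP + PA` by
an invertible matrix, hence negative definite. So for each `x ≠ 0` the function `u ↦ xᵀ F(u) x`
has negative derivative everywhere and is strictly decreasing.
-/

section Congruence

variable {m : Type*} [Fintype m]

theorem dotProduct_mulVec_transpose_mul_mul (M C : Matrix m m ℝ) (x : m → ℝ) :
    x ⬝ᵥ (Mᵀ * C * M) *ᵥ x = (M *ᵥ x) ⬝ᵥ C *ᵥ (M *ᵥ x) := by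
  rw [← mulVec_mulVec, ← mulVec_mulVec, dotProduct_mulVec, vecMul_transpose]

theorem negDef.transpose_mul_mul [DecidableEq m] {C : Matrix m m ℝ} (hC : negDef C)
    {M : Matrix m m ℝ} (hM : IsUnit M) : negDef (Mᵀ * C * M) := fun x hx => by
  rw [dotProduct_mulVec_transpose_mul_mul]
  exact hC _ fun h => hx (mulVec_injective_iff_isUnit.mpr hM (h.trans (mulVec_zero M).symm))

end Congruence

section Calculus

open scoped Matrix.Norms.Operator

variable {m : Type*} [Fintype m]

theorem HasDerivAt.dotProduct_mulVec {F : ℝ → Matrix m m ℝ} {F' : Matrix m m ℝ} {u : ℝ}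
    (hF : HasDerivAt F F' u) (x : m → ℝ) :
    HasDerivAt (fun v => x ⬝ᵥ F v *ᵥ x) (x ⬝ᵥ F' *ᵥ x) u :=
  let quadForm : Matrix m m ℝ →ₗ[ℝ] ℝ :=
    { toFun := fun M => x ⬝ᵥ M *ᵥ x
      map_add' := fun M N => by simp only [add_mulVec, dotProduct_add]
      map_smul' := fun c M => by simp only [smul_mulVec, dotProduct_smul, RingHom.id_apply] }
  quadForm.toContinuousLinearMap.hasFDerivAt.comp_hasDerivAt u hF

theorem hasDerivAt_exp_smul_transpose_mul_mul_exp_smul [DecidableEq m] (P A : Matrix m m ℝ)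
    (u : ℝ) :
    HasDerivAt (fun v : ℝ => NormedSpace.exp (v • Aᵀ) * P * NormedSpace.exp (v • A))
      (NormedSpace.exp (u • Aᵀ) * (Aᵀ * P + P * A) * NormedSpace.exp (u • A)) u := by
  refine (((hasDerivAt_exp_smul_const Aᵀ u).mul_const P).mul
    (hasDerivAt_exp_smul_const' A u)).congr_deriv ?_
  noncomm_ring

end Calculus

theorem negDef_exp_smul_transpose_mul_mul_exp_smul_sub {m : Type*} [Fintype m] [DecidableEq m]
    {P A : Matrix m m ℝ} (hC : negDef (Aᵀ * P + P * A)) {t s : ℝ} (hts : t < s) :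
    negDef (NormedSpace.exp (s • Aᵀ) * P * NormedSpace.exp (s • A) -
      NormedSpace.exp (t • Aᵀ) * P * NormedSpace.exp (t • A)) := fun x hx => by
  have hderiv_negDef (u : ℝ) :
      negDef (NormedSpace.exp (u • Aᵀ) * (Aᵀ * P + P * A) * NormedSpace.exp (u • A)) := by
    rw [← transpose_smul, exp_transpose]
    exact hC.transpose_mul_mul (isUnit_exp _)
  rw [sub_mulVec, dotProduct_sub, sub_neg]
  exact strictAnti_of_hasDerivAt_neg
    (fun u => (hasDerivAt_exp_smul_transpose_mul_mul_exp_smul P A u).dotProduct_mulVec x)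
    (fun u => hderiv_negDef u x hx) hts

theorem stmt1_general {n : ℕ} (P A : Matrix (Fin n) (Fin n) ℝ)
    (hC : negDef (Aᵀ * P + P * A)) :
    ∀ t s : ℝ, 0 ≤ t → t < s →
      negDef (mexp (s • Aᵀ) * P * mexp (s • A) - mexp (t • Aᵀ) * P * mexp (t • A)) :=
  fun _ _ _ hts => negDef_exp_smul_transpose_mul_mul_exp_smul_sub hC hts

/-- if `AᵀP + PA ≺ 0` with `P` symmetric, then
`s ↦ exp(s·Aᵀ)·P·exp(s·A)` is strictly decreasing in the Loewner order on `[0,∞)`. -/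
theorem stmt1 {n : ℕ} (P A : Matrix (Fin n) (Fin n) ℝ) (hPsym : P.IsSymm)
    (hC : negDef (Aᵀ * P + P * A)) :
    ∀ t s : ℝ, 0 ≤ t → t < s →
      negDef (mexp (s • Aᵀ) * P * mexp (s • A) - mexp (t • Aᵀ) * P * mexp (t • A)) :=
  stmt1_general P A hC
end

section
/- Let T > 0 and let A, J be real n×n matrices. Suppose there exist real symmetric positive definite n×n matrices P and Z, real symmetric n×n matrices Q and U, a real n×n matrix R, and a real n×2n matrix N such that Ψ(T) is negative definite and Φ(T) is negative definite. Then ℐ(P,A,J,T) is negative definite; that is, V(x) = xᵀPx is a discrete-time Lyapunov function for the system x_{k+1} = exp(T·A)·J·x_k. -/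
open Matrix Filter

/-- The n×2n block matrix `[I 0]`. -/
def Mxb (n : ℕ) : Matrix (Fin n) (Fin n ⊕ Fin n) ℝ := Matrix.fromCols 1 0

/-- The n×2n block matrix `[0 I]`. -/
def Mmb (n : ℕ) : Matrix (Fin n) (Fin n ⊕ Fin n) ℝ := Matrix.fromCols 0 1

/-- The n×2n block matrix `[I −J]`. -/
def Mzb {n : ℕ} (J : Matrix (Fin n) (Fin n) ℝ) : Matrix (Fin n) (Fin n ⊕ Fin n) ℝ :=
  Matrix.fromCols 1 (-J)

/-- He[X] := X + Xᵀ. -/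
def He {m : Type*} (X : Matrix m m ℝ) : Matrix m m ℝ := X + Xᵀ

/-- The 2n×2n matrix `F₀`. -/
def F0 {n : ℕ} (T : ℝ) (A J P Q R : Matrix (Fin n) (Fin n) ℝ)
    (N : Matrix (Fin n) (Fin n ⊕ Fin n) ℝ) :
    Matrix (Fin n ⊕ Fin n) (Fin n ⊕ Fin n) ℝ :=
  T • ((Mxb n)ᵀ * (Aᵀ * P + P * A) * Mxb n) - (Mzb J)ᵀ * Q * Mzb J
    + (Mmb n)ᵀ * (Jᵀ * P * J - P) * Mmb n
    + He (Nᵀ * Mzb J - (Mzb J)ᵀ * R * Mxb n)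

/-- The 2n×2n matrix `F₂`. -/
def F2 {n : ℕ} (A J Q R Z : Matrix (Fin n) (Fin n) ℝ) :
    Matrix (Fin n ⊕ Fin n) (Fin n ⊕ Fin n) ℝ :=
  He ((Mxb n)ᵀ * Aᵀ * Q * Mzb J + (Mxb n)ᵀ * Aᵀ * R * Mxb n + (Mzb J)ᵀ * R * A * Mxb n)
    + (Mxb n)ᵀ * Aᵀ * Z * A * Mxb n

/-- The 2n×2n matrix `F₃`. -/
def F3 {n : ℕ} (J U : Matrix (Fin n) (Fin n) ℝ) :
    Matrix (Fin n ⊕ Fin n) (Fin n ⊕ Fin n) ℝ :=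
  (Mmb n)ᵀ * Jᵀ * U * J * Mmb n

/-- The 2n×2n matrix `Ψ(T) = F₀ + T·(F₂ + F₃)`. -/
def Psi {n : ℕ} (T : ℝ) (A J P Z Q U R : Matrix (Fin n) (Fin n) ℝ)
    (N : Matrix (Fin n) (Fin n ⊕ Fin n) ℝ) :
    Matrix (Fin n ⊕ Fin n) (Fin n ⊕ Fin n) ℝ :=
  F0 T A J P Q R N + T • (F2 A J Q R Z + F3 J U)

/-- The 3n×3n block matrix `Φ(T) = [[F₀ − T·F₃, Nᵀ],[N, −Z/T]]`. -/
noncomputable def Phi {n : ℕ} (T : ℝ) (A J P Z Q U R : Matrix (Fin n) (Fin n) ℝ)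
    (N : Matrix (Fin n) (Fin n ⊕ Fin n) ℝ) :
    Matrix ((Fin n ⊕ Fin n) ⊕ Fin n) ((Fin n ⊕ Fin n) ⊕ Fin n) ℝ :=
  Matrix.fromBlocks (F0 T A J P Q R N - T • F3 J U) Nᵀ N (-(T⁻¹ • Z))

/-!
Fix `x ≠ 0`, let `z τ = exp(τA) J x` and `ζ = z - J x`, and consider the looped functional
`V τ = T zᵀPz + (T - τ)(ζᵀQζ + 2ζᵀRz) + τ xᵀ(JᵀPJ - P)x + (T - τ) ∫₀^τ żᵀZż + τ(T - τ)(Jx)ᵀU(Jx)`.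
Since `ζ 0 = 0`, `V T - V 0 = T xᵀ ℐ x`. Differentiating, and bounding `-∫₀^τ żᵀZż` from above by
completing the square with `w = Z⁻¹ N (z, x)`, shows that `T V'(τ)` is at most
`(T - τ) Ψ(z, x) + τ Φ((z, x), T w) < 0`. So `V` decreases strictly on `[0, T]`.
-/

section Calculus

variable {m l : Type*} [Fintype m] [Fintype l]

theorem HasDerivAt.dotProduct {u v : ℝ → m → ℝ} {u' v' : m → ℝ} {t : ℝ}
    (hu : HasDerivAt u u' t) (hv : HasDerivAt v v' t) :
    HasDerivAt (fun s => u s ⬝ᵥ v s) (u' ⬝ᵥ v t + u t ⬝ᵥ v') t := by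
  unfold _root_.dotProduct
  rw [← Finset.sum_add_distrib]
  exact HasDerivAt.fun_sum fun i _ => (hasDerivAt_pi.1 hu i).mul (hasDerivAt_pi.1 hv i)

theorem HasDerivAt.const_mulVec (M : Matrix l m ℝ) {u : ℝ → m → ℝ} {u' : m → ℝ} {t : ℝ}
    (hu : HasDerivAt u u' t) : HasDerivAt (fun s => M *ᵥ u s) (M *ᵥ u') t :=
  (Matrix.mulVecLin M).toContinuousLinearMap.hasFDerivAt.comp_hasDerivAt t hu

end Calculus

section Trajectory

attribute [local instance] Matrix.linftyOpNormedRing Matrix.linftyOpNormedAlgebra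

theorem hasDerivAt_mexp_smul_mulVec {n : ℕ} (A : Matrix (Fin n) (Fin n) ℝ) (c : Fin n → ℝ)
    (t : ℝ) : HasDerivAt (fun s : ℝ => mexp (s • A) *ᵥ c) (A *ᵥ (mexp (t • A) *ᵥ c)) t := by
  rw [Matrix.mulVec_mulVec]
  exact ((Matrix.toLin' (R := ℝ)).toLinearMap.flip c).toContinuousLinearMap.hasFDerivAt
    |>.comp_hasDerivAt t (hasDerivAt_exp_smul_const' A t)

end Trajectory

section QuadraticForms

variable {m : Type*} [Fintype m]

theorem mulVec_dotProduct {l : Type*} [Fintype l] (M : Matrix m l ℝ) (a : l → ℝ)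
    (b : m → ℝ) : (M *ᵥ a) ⬝ᵥ b = a ⬝ᵥ Mᵀ *ᵥ b := by
  rw [Matrix.dotProduct_mulVec, Matrix.vecMul_transpose]

theorem Matrix.IsSymm.dotProduct_mulVec_comm {M : Matrix m m ℝ} (hM : M.IsSymm) (a b : m → ℝ) :
    a ⬝ᵥ M *ᵥ b = b ⬝ᵥ M *ᵥ a := by
  rw [dotProduct_comm, Matrix.dotProduct_mulVec, ← Matrix.vecMul_transpose, hM.eq]

theorem posDef.posSemidef {M : Matrix m m ℝ} (hM : posDef M) : posSemidef M := by
  intro x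
  rcases eq_or_ne x 0 with rfl | hx
  · simp
  · exact (hM x hx).le

theorem posDef.exists_mulVec_eq [DecidableEq m] {M : Matrix m m ℝ} (hM : posDef M) (u : m → ℝ) :
    ∃ w, M *ᵥ w = u := by
  have hinj : Function.Injective M.mulVecLin := by
    refine (injective_iff_map_eq_zero _).2 fun w hw => ?_
    have hMw : M *ᵥ w = 0 := hw
    by_contra hw0
    simpa [hMw] using hM w hw0
  exact LinearMap.surjective_of_injective hinj u

theorem neg_le_integral_quadForm {Z : Matrix m m ℝ} (hZsym : Z.IsSymm) (hZ : posSemidef Z)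
    {z v : ℝ → m → ℝ} (hz : ∀ s, HasDerivAt z (v s) s) (hv : Continuous v) {τ : ℝ}
    (hτ : 0 ≤ τ) (w : m → ℝ) :
    -(2 * (w ⬝ᵥ Z *ᵥ (z τ - z 0)) + τ * (w ⬝ᵥ Z *ᵥ w)) ≤ ∫ s in 0..τ, v s ⬝ᵥ Z *ᵥ v s := by
  have hvZv : Continuous fun s => v s ⬝ᵥ Z *ᵥ v s := by fun_prop
  have hwZv : Continuous fun s => w ⬝ᵥ Z *ᵥ v s := by fun_prop
  have hcross : ∫ s in 0..τ, w ⬝ᵥ Z *ᵥ v s = w ⬝ᵥ Z *ᵥ (z τ - z 0) := by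
    rw [Matrix.mulVec_sub, dotProduct_sub]
    refine intervalIntegral.integral_eq_sub_of_hasDerivAt (f := fun s => w ⬝ᵥ Z *ᵥ z s)
      (fun s _ => ?_) (hwZv.intervalIntegrable _ _)
    simpa using (hasDerivAt_const s w).dotProduct ((hz s).const_mulVec Z)
  have hsquare : ∀ s, (v s + w) ⬝ᵥ Z *ᵥ (v s + w)
      = v s ⬝ᵥ Z *ᵥ v s + (2 * (w ⬝ᵥ Z *ᵥ v s) + w ⬝ᵥ Z *ᵥ w) := fun s => by
    simp only [Matrix.mulVec_add, dotProduct_add, add_dotProduct]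
    linear_combination hZsym.dotProduct_mulVec_comm (v s) w
  have hnonneg : 0 ≤ ∫ s in 0..τ, (v s + w) ⬝ᵥ Z *ᵥ (v s + w) :=
    intervalIntegral.integral_nonneg hτ fun s _ => hZ (v s + w)
  rw [funext hsquare, intervalIntegral.integral_add (hvZv.intervalIntegrable _ _)
      (((hwZv.const_mul 2).fun_add continuous_const).intervalIntegrable _ _),
    intervalIntegral.integral_add ((hwZv.const_mul 2).intervalIntegrable _ _)
      intervalIntegrable_const, intervalIntegral.integral_const_mul, hcross,
    intervalIntegral.integral_const, smul_eq_mul, sub_zero] at hnonneg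
  linarith

end QuadraticForms

theorem dotProduct_scrI_mulVec {n : ℕ} (P A J : Matrix (Fin n) (Fin n) ℝ) (T : ℝ)
    (x : Fin n → ℝ) :
    x ⬝ᵥ scrI P A J T *ᵥ x = (mexp (T • A) *ᵥ (J *ᵥ x)) ⬝ᵥ P *ᵥ (mexp (T • A) *ᵥ (J *ᵥ x))
      - x ⬝ᵥ P *ᵥ x := by
  rw [scrI, mexp, ← Matrix.transpose_smul, Matrix.exp_transpose, ← mexp, ← Matrix.transpose_mul]
  simp only [Matrix.sub_mulVec, dotProduct_sub, ← Matrix.mulVec_mulVec, ← mulVec_dotProduct]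

section BlockQuadraticForms

variable {n : ℕ}

theorem sumElim_dotProduct_F0_mulVec (T : ℝ) (A J P Q R : Matrix (Fin n) (Fin n) ℝ)
    (N : Matrix (Fin n) (Fin n ⊕ Fin n) ℝ) (v x : Fin n → ℝ) :
    Sum.elim v x ⬝ᵥ F0 T A J P Q R N *ᵥ Sum.elim v x
      = T * ((A *ᵥ v) ⬝ᵥ P *ᵥ v + v ⬝ᵥ P *ᵥ (A *ᵥ v)) - (v - J *ᵥ x) ⬝ᵥ Q *ᵥ (v - J *ᵥ x)
        + x ⬝ᵥ (Jᵀ * P * J - P) *ᵥ x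
        + 2 * ((N *ᵥ Sum.elim v x) ⬝ᵥ (v - J *ᵥ x) - (v - J *ᵥ x) ⬝ᵥ R *ᵥ v) := by
  simp only [F0, He, Mxb, Mmb, Mzb, Matrix.transpose_mul, Matrix.transpose_transpose,
    Matrix.transpose_sub, Matrix.add_mulVec, Matrix.sub_mulVec, Matrix.smul_mulVec,
    ← Matrix.mulVec_mulVec, ← mulVec_dotProduct, Matrix.fromCols_mulVec_sumElim,
    Matrix.mulVec_add, Matrix.mulVec_sub, Matrix.neg_mulVec, Matrix.one_mulVec,
    Matrix.zero_mulVec, dotProduct_add, dotProduct_sub, dotProduct_smul, sub_dotProduct,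
    smul_eq_mul, add_zero, zero_add, ← sub_eq_add_neg]
  simp only [dotProduct_comm]
  ring

theorem sumElim_dotProduct_F2_mulVec (A J Q R Z : Matrix (Fin n) (Fin n) ℝ) (v x : Fin n → ℝ) :
    Sum.elim v x ⬝ᵥ F2 A J Q R Z *ᵥ Sum.elim v x
      = 2 * ((A *ᵥ v) ⬝ᵥ Q *ᵥ (v - J *ᵥ x) + (A *ᵥ v) ⬝ᵥ R *ᵥ v
          + (v - J *ᵥ x) ⬝ᵥ R *ᵥ (A *ᵥ v))
        + (A *ᵥ v) ⬝ᵥ Z *ᵥ (A *ᵥ v) := by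
  simp only [F2, He, Mxb, Mzb, Matrix.transpose_mul, Matrix.transpose_transpose,
    Matrix.transpose_add, Matrix.add_mulVec, ← Matrix.mulVec_mulVec,
    ← mulVec_dotProduct, Matrix.fromCols_mulVec_sumElim, Matrix.neg_mulVec,
    Matrix.one_mulVec, Matrix.zero_mulVec, dotProduct_add, add_zero,
    ← sub_eq_add_neg]
  simp only [dotProduct_comm]
  ring

theorem sumElim_dotProduct_F3_mulVec (J U : Matrix (Fin n) (Fin n) ℝ) (v x : Fin n → ℝ) :
    Sum.elim v x ⬝ᵥ F3 J U *ᵥ Sum.elim v x = (J *ᵥ x) ⬝ᵥ U *ᵥ (J *ᵥ x) := by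
  simp only [F3, Mmb, ← Matrix.mulVec_mulVec, ← mulVec_dotProduct,
    Matrix.fromCols_mulVec_sumElim, Matrix.one_mulVec, Matrix.zero_mulVec, zero_add]

theorem dotProduct_Psi_mulVec (T : ℝ) (A J P Z Q U R : Matrix (Fin n) (Fin n) ℝ)
    (N : Matrix (Fin n) (Fin n ⊕ Fin n) ℝ) (η : Fin n ⊕ Fin n → ℝ) :
    η ⬝ᵥ Psi T A J P Z Q U R N *ᵥ η
      = η ⬝ᵥ F0 T A J P Q R N *ᵥ η + T * (η ⬝ᵥ F2 A J Q R Z *ᵥ η + η ⬝ᵥ F3 J U *ᵥ η) := by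
  simp only [Psi, Matrix.add_mulVec, Matrix.smul_mulVec, dotProduct_add, dotProduct_smul,
    smul_eq_mul]

theorem sumElim_dotProduct_Phi_mulVec (T : ℝ) (A J P Z Q U R : Matrix (Fin n) (Fin n) ℝ)
    (N : Matrix (Fin n) (Fin n ⊕ Fin n) ℝ) (η : Fin n ⊕ Fin n → ℝ) (y : Fin n → ℝ) :
    Sum.elim η y ⬝ᵥ Phi T A J P Z Q U R N *ᵥ Sum.elim η y
      = η ⬝ᵥ F0 T A J P Q R N *ᵥ η - T * (η ⬝ᵥ F3 J U *ᵥ η)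
        + 2 * ((N *ᵥ η) ⬝ᵥ y) - T⁻¹ * (y ⬝ᵥ Z *ᵥ y) := by
  simp only [Phi, Matrix.fromBlocks_mulVec, sumElim_dotProduct_sumElim, Matrix.sub_mulVec,
    Matrix.smul_mulVec, Matrix.neg_mulVec, ← mulVec_dotProduct, dotProduct_add,
    dotProduct_sub, dotProduct_neg, dotProduct_smul, smul_eq_mul, Sum.elim_comp_inl,
    Sum.elim_comp_inr]
  rw [dotProduct_comm y]
  ring

end BlockQuadraticForms

section LMI

variable {n : ℕ} {T : ℝ} {A J P Z Q U R : Matrix (Fin n) (Fin n) ℝ}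
  {N : Matrix (Fin n) (Fin n ⊕ Fin n) ℝ}

/-- `T⁻¹ ((T - τ) Ψ(η) + τ Φ(η, T w))`, using `Z w = N η` to collapse the cross terms of `Φ`. -/
theorem interpolated_quadForm_neg {τ : ℝ} (hτ : τ ∈ Set.Ioo 0 T)
    (hPsi : negDef (Psi T A J P Z Q U R N)) (hPhi : negDef (Phi T A J P Z Q U R N))
    {η : Fin n ⊕ Fin n → ℝ} (hη : η ≠ 0) {w : Fin n → ℝ} (hw : Z *ᵥ w = N *ᵥ η) :
    η ⬝ᵥ F0 T A J P Q R N *ᵥ η + (T - τ) * (η ⬝ᵥ F2 A J Q R Z *ᵥ η)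
      + (T - 2 * τ) * (η ⬝ᵥ F3 J U *ᵥ η) + τ * (w ⬝ᵥ Z *ᵥ w) < 0 := by
  obtain ⟨hτ0, hτT⟩ := hτ
  have hT : 0 < T := hτ0.trans hτT
  have hΨ := hPsi η hη
  have hΦ := hPhi (Sum.elim η (T • w)) fun h => hη (funext fun i => congrFun h (Sum.inl i))
  rw [dotProduct_Psi_mulVec] at hΨ
  have hcross : (N *ᵥ η) ⬝ᵥ (T • w) = T * (w ⬝ᵥ Z *ᵥ w) := by
    rw [← hw, dotProduct_smul, dotProduct_comm, smul_eq_mul]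
  have hsquare : T⁻¹ * ((T • w) ⬝ᵥ Z *ᵥ (T • w)) = T * (w ⬝ᵥ Z *ᵥ w) := by
    rw [Matrix.mulVec_smul, dotProduct_smul, smul_dotProduct, smul_eq_mul, smul_eq_mul,
      inv_mul_cancel_left₀ hT.ne']
  rw [sumElim_dotProduct_Phi_mulVec, hcross, hsquare] at hΦ
  have hcomb := add_neg (mul_neg_of_pos_of_neg (sub_pos.2 hτT) hΨ) (mul_neg_of_pos_of_neg hτ0 hΦ)
  refine neg_of_mul_neg_right (a := T) ?_ hT.le
  linear_combination hcomb

end LMI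

section LoopedFunctional

variable {n : ℕ} {T : ℝ} {A J P Z Q U R : Matrix (Fin n) (Fin n) ℝ}
  {N : Matrix (Fin n) (Fin n ⊕ Fin n) ℝ} {x : Fin n → ℝ} {z : ℝ → Fin n → ℝ} {g : ℝ → ℝ}

def loopedFunctional (T : ℝ) (J P Q R U : Matrix (Fin n) (Fin n) ℝ) (x : Fin n → ℝ)
    (z : ℝ → Fin n → ℝ) (g : ℝ → ℝ) (τ : ℝ) : ℝ :=
  T * (z τ ⬝ᵥ P *ᵥ z τ)
    + (T - τ) * ((z τ - J *ᵥ x) ⬝ᵥ Q *ᵥ (z τ - J *ᵥ x) + 2 * ((z τ - J *ᵥ x) ⬝ᵥ R *ᵥ z τ))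
    + τ * (x ⬝ᵥ (Jᵀ * P * J - P) *ᵥ x) + (T - τ) * g τ
    + τ * (T - τ) * ((J *ᵥ x) ⬝ᵥ U *ᵥ (J *ᵥ x))

theorem loopedFunctional_self_sub_zero (hz0 : z 0 = J *ᵥ x) (hg0 : g 0 = 0) :
    loopedFunctional T J P Q R U x z g T - loopedFunctional T J P Q R U x z g 0
      = T * (z T ⬝ᵥ P *ᵥ z T - x ⬝ᵥ P *ᵥ x) := by
  simp only [loopedFunctional, hz0, hg0, sub_self, Matrix.sub_mulVec, ← Matrix.mulVec_mulVec,
    ← mulVec_dotProduct, dotProduct_sub, zero_dotProduct]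
  ring

/-- Valid for every `N`: the `N`-part of `F₀` cancels against the second summand. -/
theorem hasDerivAt_loopedFunctional (hQsym : Q.IsSymm) (N : Matrix (Fin n) (Fin n ⊕ Fin n) ℝ)
    {τ : ℝ} (hz : HasDerivAt z (A *ᵥ z τ) τ)
    (hg : HasDerivAt g ((A *ᵥ z τ) ⬝ᵥ Z *ᵥ (A *ᵥ z τ)) τ) :
    HasDerivAt (loopedFunctional T J P Q R U x z g)
      (Sum.elim (z τ) x ⬝ᵥ F0 T A J P Q R N *ᵥ Sum.elim (z τ) x
        - 2 * ((N *ᵥ Sum.elim (z τ) x) ⬝ᵥ (z τ - J *ᵥ x))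
        + (T - τ) * (Sum.elim (z τ) x ⬝ᵥ F2 A J Q R Z *ᵥ Sum.elim (z τ) x)
        + (T - 2 * τ) * (Sum.elim (z τ) x ⬝ᵥ F3 J U *ᵥ Sum.elim (z τ) x) - g τ) τ := by
  have hζ := hz.sub_const (J *ᵥ x)
  have hT : HasDerivAt (fun s => T - s) (-1) τ := (hasDerivAt_id τ).const_sub T
  have h := ((((hz.dotProduct (hz.const_mulVec P)).const_mul T).add (hT.mul
    ((hζ.dotProduct (hζ.const_mulVec Q)).add
      ((hζ.dotProduct (hz.const_mulVec R)).const_mul 2)))).add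
    ((hasDerivAt_id τ).mul_const (x ⬝ᵥ (Jᵀ * P * J - P) *ᵥ x))).add (hT.mul hg) |>.add
    (((hasDerivAt_id τ).mul hT).mul_const ((J *ᵥ x) ⬝ᵥ U *ᵥ (J *ᵥ x)))
  refine h.congr_deriv ?_
  rw [sumElim_dotProduct_F0_mulVec, sumElim_dotProduct_F2_mulVec, sumElim_dotProduct_F3_mulVec]
  simp only [id, Pi.add_apply]
  linear_combination (T - τ) * hQsym.dotProduct_mulVec_comm (z τ - J *ᵥ x) (A *ᵥ z τ)

theorem strictAntiOn_loopedFunctional (hQsym : Q.IsSymm) (hZsym : Z.IsSymm) (hZ : posDef Z)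
    (hPsi : negDef (Psi T A J P Z Q U R N)) (hPhi : negDef (Phi T A J P Z Q U R N))
    (hx : x ≠ 0) (hz : ∀ τ, HasDerivAt z (A *ᵥ z τ) τ)
    (hg : ∀ τ, HasDerivAt g ((A *ᵥ z τ) ⬝ᵥ Z *ᵥ (A *ᵥ z τ)) τ)
    (hgz : ∀ τ ∈ Set.Ioo 0 T, ∀ w, -(2 * (w ⬝ᵥ Z *ᵥ (z τ - J *ᵥ x)) + τ * (w ⬝ᵥ Z *ᵥ w)) ≤ g τ) :
    StrictAntiOn (loopedFunctional T J P Q R U x z g) (Set.Icc 0 T) := by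
  refine strictAntiOn_of_deriv_neg (convex_Icc 0 T)
    (HasDerivAt.continuousOn fun τ _ => hasDerivAt_loopedFunctional hQsym N (hz τ) (hg τ))
    fun τ hτ => ?_
  rw [interior_Icc] at hτ
  rw [(hasDerivAt_loopedFunctional hQsym N (hz τ) (hg τ)).deriv]
  have hη : Sum.elim (z τ) x ≠ 0 := fun h => hx (funext fun i => congrFun h (Sum.inr i))
  obtain ⟨w, hw⟩ := hZ.exists_mulVec_eq (N *ᵥ Sum.elim (z τ) x)
  have hcross : (N *ᵥ Sum.elim (z τ) x) ⬝ᵥ (z τ - J *ᵥ x) = w ⬝ᵥ Z *ᵥ (z τ - J *ᵥ x) := by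
    rw [← hw, mulVec_dotProduct, hZsym.eq]
  linarith [interpolated_quadForm_neg hτ hPsi hPhi hη hw, hgz τ hτ w]

end LoopedFunctional

theorem stmt6_general {n : ℕ} (T : ℝ) (hT : 0 < T) (A J : Matrix (Fin n) (Fin n) ℝ)
    (P Z Q U R : Matrix (Fin n) (Fin n) ℝ) (N : Matrix (Fin n) (Fin n ⊕ Fin n) ℝ)
    (hZsym : Z.IsSymm) (hZ : posDef Z) (hQsym : Q.IsSymm)
    (hPsi : negDef (Psi T A J P Z Q U R N))
    (hPhi : negDef (Phi T A J P Z Q U R N)) :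
    negDef (scrI P A J T) := by
  intro x hx
  set z : ℝ → Fin n → ℝ := fun τ => mexp (τ • A) *ᵥ (J *ᵥ x)
  have hz : ∀ τ, HasDerivAt z (A *ᵥ z τ) τ := hasDerivAt_mexp_smul_mulVec A (J *ᵥ x)
  have hz0 : z 0 = J *ᵥ x := by simp [z, mexp]
  have hAz : Continuous fun s => A *ᵥ z s :=
    continuous_const.matrix_mulVec (Differentiable.continuous fun s => (hz s).differentiableAt)
  set g : ℝ → ℝ := fun τ => ∫ s in 0..τ, (A *ᵥ z s) ⬝ᵥ Z *ᵥ (A *ᵥ z s)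
  have hg : ∀ τ, HasDerivAt g ((A *ᵥ z τ) ⬝ᵥ Z *ᵥ (A *ᵥ z τ)) τ := fun τ =>
    ((hAz.dotProduct (continuous_const.matrix_mulVec hAz)).integral_hasStrictDerivAt 0 τ).hasDerivAt
  have hanti := strictAntiOn_loopedFunctional (U := U) hQsym hZsym hZ hPsi hPhi hx hz hg
    fun τ hτ w => by
      simpa only [hz0] using neg_le_integral_quadForm hZsym hZ.posSemidef hz hAz hτ.1.le w
  have hdecrease := sub_neg.2 (hanti (Set.left_mem_Icc.2 hT.le) (Set.right_mem_Icc.2 hT.le) hT)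
  rw [loopedFunctional_self_sub_zero hz0 intervalIntegral.integral_same] at hdecrease
  rw [dotProduct_scrI_mulVec]
  exact neg_of_mul_neg_right hdecrease hT.le

/-- feasibility of the LMIs `Ψ(T) ≺ 0` and `Φ(T) ≺ 0` implies
`ℐ(P,A,J,T) ≺ 0`, i.e. `V(x) = xᵀPx` is a discrete-time Lyapunov function for
`x_{k+1} = exp(T·A)·J·x_k`. -/
theorem stmt6 {n : ℕ} (T : ℝ) (hT : 0 < T) (A J : Matrix (Fin n) (Fin n) ℝ)
    (P Z Q U R : Matrix (Fin n) (Fin n) ℝ) (N : Matrix (Fin n) (Fin n ⊕ Fin n) ℝ)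
    (hPsym : P.IsSymm) (hP : posDef P) (hZsym : Z.IsSymm) (hZ : posDef Z)
    (hQsym : Q.IsSymm) (hUsym : U.IsSymm)
    (hPsi : negDef (Psi T A J P Z Q U R N))
    (hPhi : negDef (Phi T A J P Z Q U R N)) :
    negDef (scrI P A J T) :=
  stmt6_general T hT A J P Z Q U R N hZsym hZ hQsym hPsi hPhi
end

section
/- (Limit LMI for T → 0.) Let P be a real symmetric n×n matrix and J a real n×n matrix, and define the n×2n block matrices Mζ := [I −J], Mx := [I 0], M₋ := [0 I]. Then there exist a real symmetric n×n matrix Q, a real n×n matrix R, and a real n×2n matrix N such that the 2n×2n matrix −MζᵀQMζ − MζᵀRMx − MxᵀRᵀMζ + NᵀMζ + MζᵀN + M₋ᵀ(JᵀPJ − P)M₋ is negative definite if and only if JᵀPJ − P is negative definite. -/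
open Matrix Filter

/-!
Every term of the limit LMI other than the `M₋` block has `Mζ` as a left or right factor, so on
the kernel `{(J y, y)}` of `Mζ` its quadratic form is `yᵀ S y`. Conversely, `Q = I`, `R = 0`,
`N = 0` give the form `-|a - J b|² + bᵀ S b` at `(a, b)`, which is negative whenever `S` is.
-/

/-- The matrix of the limit LMI, with `S` in place of `JᵀPJ − P`. -/
def limitLMI {n : ℕ} (J S Q R : Matrix (Fin n) (Fin n) ℝ)
    (N : Matrix (Fin n) (Fin n ⊕ Fin n) ℝ) : Matrix (Fin n ⊕ Fin n) (Fin n ⊕ Fin n) ℝ :=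
  -((Mzb J)ᵀ * Q * Mzb J) - (Mzb J)ᵀ * R * Mxb n - (Mxb n)ᵀ * Rᵀ * Mzb J
    + Nᵀ * Mzb J + (Mzb J)ᵀ * N + (Mmb n)ᵀ * S * Mmb n

lemma dotProduct_transpose_mul_mulVec {k m : Type*} [Fintype k] [Fintype m]
    (X Y : Matrix k m ℝ) (v : m → ℝ) :
    v ⬝ᵥ (Xᵀ * Y) *ᵥ v = (X *ᵥ v) ⬝ᵥ (Y *ᵥ v) := by
  rw [← mulVec_mulVec, dotProduct_mulVec, vecMul_transpose]

lemma dotProduct_self_pos {m : Type*} [Fintype m] {v : m → ℝ} (hv : v ≠ 0) : 0 < v ⬝ᵥ v := by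
  simpa only [star_trivial] using dotProduct_star_self_pos_iff.mpr hv

section

variable {n : ℕ}

@[simp]
lemma Mzb_mulVec_sumElim (J : Matrix (Fin n) (Fin n) ℝ) (a b : Fin n → ℝ) :
    Mzb J *ᵥ Sum.elim a b = a - J *ᵥ b := by
  simp [Mzb, sub_eq_add_neg, neg_mulVec]

@[simp]
lemma Mxb_mulVec_sumElim (a b : Fin n → ℝ) : Mxb n *ᵥ Sum.elim a b = a := by
  simp [Mxb]

@[simp]
lemma Mmb_mulVec_sumElim (a b : Fin n → ℝ) : Mmb n *ᵥ Sum.elim a b = b := by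
  simp [Mmb]

/-- The quadratic form of the limit LMI in the coordinates `z = Mζ v`, `a = Mx v`, `b = M₋ v`. -/
lemma dotProduct_limitLMI_mulVec (J S Q R : Matrix (Fin n) (Fin n) ℝ)
    (N : Matrix (Fin n) (Fin n ⊕ Fin n) ℝ) (a b : Fin n → ℝ) :
    let v := Sum.elim a b
    let z := a - J *ᵥ b
    v ⬝ᵥ limitLMI J S Q R N *ᵥ v
      = -(z ⬝ᵥ Q *ᵥ z) - 2 * (z ⬝ᵥ R *ᵥ a) + 2 * (z ⬝ᵥ N *ᵥ v) + b ⬝ᵥ S *ᵥ b := by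
  intro v z
  have hQ : v ⬝ᵥ ((Mzb J)ᵀ * Q * Mzb J) *ᵥ v = z ⬝ᵥ Q *ᵥ z := by
    rw [Matrix.mul_assoc, dotProduct_transpose_mul_mulVec, ← mulVec_mulVec]; simp [v, z]
  have hR : v ⬝ᵥ ((Mzb J)ᵀ * R * Mxb n) *ᵥ v = z ⬝ᵥ R *ᵥ a := by
    rw [Matrix.mul_assoc, dotProduct_transpose_mul_mulVec, ← mulVec_mulVec]; simp [v, z]
  have hRt : v ⬝ᵥ ((Mxb n)ᵀ * Rᵀ * Mzb J) *ᵥ v = z ⬝ᵥ R *ᵥ a := by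
    rw [Matrix.mul_assoc, dotProduct_transpose_mul_mulVec, ← mulVec_mulVec, dotProduct_mulVec,
      vecMul_transpose, dotProduct_comm]; simp [v, z]
  have hN : v ⬝ᵥ (Nᵀ * Mzb J) *ᵥ v = z ⬝ᵥ N *ᵥ v := by
    rw [dotProduct_transpose_mul_mulVec, dotProduct_comm]; simp [v, z]
  have hNt : v ⬝ᵥ ((Mzb J)ᵀ * N) *ᵥ v = z ⬝ᵥ N *ᵥ v := by
    rw [dotProduct_transpose_mul_mulVec]; simp [v, z]
  have hS : v ⬝ᵥ ((Mmb n)ᵀ * S * Mmb n) *ᵥ v = b ⬝ᵥ S *ᵥ b := by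
    rw [Matrix.mul_assoc, dotProduct_transpose_mul_mulVec, ← mulVec_mulVec]; simp [v]
  simp only [limitLMI, add_mulVec, sub_mulVec, neg_mulVec, dotProduct_add, dotProduct_sub,
    dotProduct_neg, hQ, hR, hRt, hN, hNt, hS]
  ring

lemma negDef_of_negDef_limitLMI {J S Q R : Matrix (Fin n) (Fin n) ℝ}
    {N : Matrix (Fin n) (Fin n ⊕ Fin n) ℝ} (h : negDef (limitLMI J S Q R N)) : negDef S := by
  intro y hy
  have hv : Sum.elim (J *ᵥ y) y ≠ 0 := fun hv ↦ hy (funext fun i ↦ congrFun hv (Sum.inr i))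
  simpa [dotProduct_limitLMI_mulVec] using h _ hv

lemma negDef_limitLMI_one_zero_zero {J S : Matrix (Fin n) (Fin n) ℝ} (hS : negDef S) :
    negDef (limitLMI J S 1 0 0) := by
  intro v hv
  obtain ⟨a, b, rfl⟩ : ∃ a b, v = Sum.elim a b :=
    ⟨v ∘ Sum.inl, v ∘ Sum.inr, (Sum.elim_comp_inl_inr v).symm⟩
  simp only [dotProduct_limitLMI_mulVec, one_mulVec, zero_mulVec, dotProduct_zero, mul_zero,
    sub_zero, add_zero]
  rcases eq_or_ne b 0 with rfl | hb
  · have ha : a ≠ 0 := by rintro rfl; exact hv (by ext (i | i) <;> rfl)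
    simpa using dotProduct_self_pos ha
  · have := dotProduct_star_self_nonneg (a - J *ᵥ b)
    rw [star_trivial] at this
    linarith [hS b hb]

theorem exists_negDef_limitLMI_iff (J S : Matrix (Fin n) (Fin n) ℝ) :
    (∃ (Q R : Matrix (Fin n) (Fin n) ℝ) (N : Matrix (Fin n) (Fin n ⊕ Fin n) ℝ),
      Q.IsSymm ∧ negDef (limitLMI J S Q R N)) ↔ negDef S :=
  ⟨fun ⟨_, _, _, _, h⟩ ↦ negDef_of_negDef_limitLMI h,
    fun hS ↦ ⟨1, 0, 0, isSymm_one, negDef_limitLMI_one_zero_zero hS⟩⟩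

end

theorem stmt10_general {n : ℕ} (P J : Matrix (Fin n) (Fin n) ℝ) :
    (∃ (Q R : Matrix (Fin n) (Fin n) ℝ) (N : Matrix (Fin n) (Fin n ⊕ Fin n) ℝ),
      Q.IsSymm ∧
      negDef (-((Mzb J)ᵀ * Q * Mzb J) - (Mzb J)ᵀ * R * Mxb n - (Mxb n)ᵀ * Rᵀ * Mzb J
        + Nᵀ * Mzb J + (Mzb J)ᵀ * N + (Mmb n)ᵀ * (Jᵀ * P * J - P) * Mmb n)) ↔
    negDef (Jᵀ * P * J - P) :=
  exists_negDef_limitLMI_iff J (Jᵀ * P * J - P)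

/-- Limit LMI for T → 0: there exist `Q = Qᵀ`, `R`, `N` making
`−MζᵀQMζ − MζᵀRMx − MxᵀRᵀMζ + NᵀMζ + MζᵀN + M₋ᵀ(JᵀPJ − P)M₋` negative definite
if and only if `JᵀPJ − P` is negative definite. -/
theorem stmt10 {n : ℕ} (P J : Matrix (Fin n) (Fin n) ℝ) (hPsym : P.IsSymm) :
    (∃ (Q R : Matrix (Fin n) (Fin n) ℝ) (N : Matrix (Fin n) (Fin n ⊕ Fin n) ℝ),
      Q.IsSymm ∧
      negDef (-((Mzb J)ᵀ * Q * Mzb J) - (Mzb J)ᵀ * R * Mxb n - (Mxb n)ᵀ * Rᵀ * Mzb J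
        + Nᵀ * Mzb J + (Mzb J)ᵀ * N + (Mmb n)ᵀ * (Jᵀ * P * J - P) * Mmb n)) ↔
    negDef (Jᵀ * P * J - P) :=
  stmt10_general P J
end
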